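/- Let γ ∈ SL₂(ℤ) with tr(γ) ≠ 2 and I - γ invertible over ℚ. Define f : ℤ² → ℚ by f(z) = -(1/2) ω((I-γ)⁻¹ z, z) (computed in ℚ²) and rescale m̃_z = q^{-f(z)} m_z in the quantum torus A (extending scalars to allow fractional powers of q). Then every twisted commutator [m̃_x, m̃_y]_γ is a scalar multiple of m̃_{x+y} - m̃_{x+γy}. -/
import Mathlib


/-- The standard symplectic form, over `ℚ`. -/
def omegaQ (x y : Fin 2 → ℚ) : ℚ := x 0 * y 1 - x 1 * y 0

/-- The symplectic form on `ℤ²`. -/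
def omegaZ (x y : Fin 2 → ℤ) : ℤ := x 0 * y 1 - x 1 * y 0

/-- Inclusion `ℤ² ⊂ ℚ²`. -/
def vQ (z : Fin 2 → ℤ) : Fin 2 → ℚ := fun i => (z i : ℚ)

/-- An integer matrix viewed as a rational matrix. -/
def matQ (γ : Matrix (Fin 2) (Fin 2) ℤ) : Matrix (Fin 2) (Fin 2) ℚ :=
  γ.map (Int.cast : ℤ → ℚ)

/-- The renormalization exponent `f(z) = -(1/2)·ω((I-γ)⁻¹z, z)`, computed over `ℚ`. -/
noncomputable def fRenorm (γ : Matrix (Fin 2) (Fin 2) ℤ) (z : Fin 2 → ℤ) : ℚ :=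
  -(1 / 2 : ℚ) * omegaQ (((1 : Matrix (Fin 2) (Fin 2) ℚ) - matQ γ)⁻¹.mulVec (vQ z)) (vQ z)

lemma key (g : Matrix (Fin 2) (Fin 2) ℤ) (hdet : g.det = 1)
    (hN : ((1 : Matrix (Fin 2) (Fin 2) ℚ) - matQ g).det ≠ 0) (x y : Fin 2 → ℤ) :
    fRenorm g (x + y) - fRenorm g x - fRenorm g y + (omegaZ x y : ℚ)/2
      = fRenorm g (y + g.mulVec x) - fRenorm g y - fRenorm g (g.mulVec x)
        + (omegaZ y (g.mulVec x) : ℚ)/2 := by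
  have hM : ((1 : Matrix (Fin 2) (Fin 2) ℚ) - matQ g)
      = !![1 - (g 0 0 : ℚ), -(g 0 1 : ℚ); -(g 1 0 : ℚ), 1 - (g 1 1 : ℚ)] := by
    ext i j
    fin_cases i <;> fin_cases j <;> simp [matQ, Matrix.one_apply]
  have hD : ((1:ℚ) - g 0 0) * (1 - g 1 1) - -(g 0 1 : ℚ) * -(g 1 0 : ℚ) ≠ 0 := by
    rw [hM, Matrix.det_fin_two_of] at hN
    exact hN
  have hinvN : ((1 : Matrix (Fin 2) (Fin 2) ℚ) - matQ g)⁻¹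
      = ((1 - (g 0 0:ℚ)) * (1 - (g 1 1:ℚ)) - -(g 0 1:ℚ) * -(g 1 0:ℚ))⁻¹ •
        !![1 - (g 1 1:ℚ), (g 0 1:ℚ); (g 1 0:ℚ), 1 - (g 0 0:ℚ)] := by
    rw [hM, Matrix.inv_def, Matrix.adjugate_fin_two_of, Matrix.det_fin_two_of,
      Ring.inverse_eq_inv']
    congr 1
    ext i j
    fin_cases i <;> fin_cases j <;> simp
  have hdet2 : (g 0 0:ℚ) * g 1 1 - g 0 1 * g 1 0 = 1 := by
    have := Matrix.det_fin_two g; rw [hdet] at this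
    exact_mod_cast this.symm
  simp only [fRenorm, omegaQ, omegaZ, vQ, hinvN, Matrix.mulVec, dotProduct,
    Fin.sum_univ_two, Matrix.smul_apply, Pi.add_apply, Matrix.cons_val_zero,
    Matrix.cons_val_one, Matrix.head_cons, Matrix.cons_val', Matrix.empty_val',
    Matrix.head_fin_const, smul_eq_mul]
  push_cast
  set A := (g 0 0 : ℚ) with hA
  set B := (g 0 1 : ℚ) with hB
  set C := (g 1 0 : ℚ) with hC
  set Dd := (g 1 1 : ℚ) with hDd
  have hDE : ((1 - A) * (1 - Dd) - -B * -C) * ((1 - A) * (1 - Dd) - -B * -C)⁻¹ = 1 :=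
    mul_inv_cancel₀ hD
  set E := ((1 - A) * (1 - Dd) - -B * -C)⁻¹ with hE
  have hdet2' : A * Dd - B * C = 1 := hdet2
  set X0 := (x 0 : ℚ); set X1 := (x 1 : ℚ); set Y0 := (y 0 : ℚ); set Y1 := (y 1 : ℚ)
  simp only [Matrix.of_apply, Matrix.cons_val_zero, Matrix.cons_val_one, Matrix.head_cons,
    Matrix.cons_val', Matrix.empty_val', Matrix.cons_val_fin_one, Matrix.head_fin_const]
  linear_combination ((1/2 * (X1*Y0 - X0*Y1 - Dd*X1*Y0 - C*X0*Y0 + B*X1*Y1 + A*X0*Y1)) * E) * hdet2'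
    + ((C*X0*Y0 + Dd*X1*Y0 - A*X0*Y1 - B*X1*Y1 - X0*Y1 + X1*Y0)/2) * hDE


/-- For `γ ∈ SL₂(ℤ)` with `tr γ ≠ 2` (so `I - γ` is invertible over `ℚ`), after the
renormalization `m̃_z = q^{-f(z)} • m_z` (where `e : ℚ → 𝕂` encodes the fractional powers
`r ↦ q^r` of `q`, so that `m_x m_y = e(ω(x,y)/2) • m_{x+y}`), every twisted commutator
`[m̃_x, m̃_y]_γ = m̃_x m̃_y - m̃_y m̃_{γx}` is a scalar multiple of `m̃_{x+y} - m̃_{y+γx}`. -/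
theorem renormalized_commutator_proportional (𝕂 : Type*) [Field 𝕂] (A : Type*) [Ring A]
    [Algebra 𝕂 A] (e : ℚ → 𝕂) (he : ∀ a b : ℚ, e (a + b) = e a * e b)
    (m : (Fin 2 → ℤ) → A)
    (hmul : ∀ x y : Fin 2 → ℤ, m x * m y = e ((omegaZ x y : ℚ) / 2) • m (x + y))
    (γ : Matrix.SpecialLinearGroup (Fin 2) ℤ)
    (htr : Matrix.trace (γ : Matrix (Fin 2) (Fin 2) ℤ) ≠ 2)
    (hinv : IsUnit ((1 : Matrix (Fin 2) (Fin 2) ℚ) - matQ (γ : Matrix (Fin 2) (Fin 2) ℤ)))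
    (x y : Fin 2 → ℤ) :
    ∃ c : 𝕂,
      (e (-(fRenorm (γ : Matrix (Fin 2) (Fin 2) ℤ) x)) • m x) *
            (e (-(fRenorm (γ : Matrix (Fin 2) (Fin 2) ℤ) y)) • m y) -
          (e (-(fRenorm (γ : Matrix (Fin 2) (Fin 2) ℤ) y)) • m y) *
            (e (-(fRenorm (γ : Matrix (Fin 2) (Fin 2) ℤ)
                  ((γ : Matrix (Fin 2) (Fin 2) ℤ).mulVec x))) •
              m ((γ : Matrix (Fin 2) (Fin 2) ℤ).mulVec x)) =
        c •
          ((e (-(fRenorm (γ : Matrix (Fin 2) (Fin 2) ℤ) (x + y))) • m (x + y)) -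
            (e (-(fRenorm (γ : Matrix (Fin 2) (Fin 2) ℤ)
                  (y + (γ : Matrix (Fin 2) (Fin 2) ℤ).mulVec x))) •
              m (y + (γ : Matrix (Fin 2) (Fin 2) ℤ).mulVec x))) := by
  set g : Matrix (Fin 2) (Fin 2) ℤ := (γ : Matrix (Fin 2) (Fin 2) ℤ) with hg
  have hdetg : g.det = 1 := γ.prop
  have hNdet : ((1 : Matrix (Fin 2) (Fin 2) ℚ) - matQ g).det ≠ 0 :=
    ((Matrix.isUnit_iff_isUnit_det _).mp hinv).ne_zero
  have hkey := key g hdetg hNdet x y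
  by_cases h0 : e 0 = 0
  · refine ⟨0, ?_⟩
    have hz : ∀ a : ℚ, e a = 0 := fun a => by
      have : e a = e a * e 0 := by rw [← he, add_zero]
      rw [this, h0, mul_zero]
    simp [hz]
  · set C : ℚ := -(fRenorm g x) + -(fRenorm g y) + (omegaZ x y : ℚ)/2 + fRenorm g (x + y)
      with hC
    refine ⟨e C, ?_⟩
    have k1 : e (-(fRenorm g x)) * e (-(fRenorm g y)) * e ((omegaZ x y : ℚ)/2)
        = e C * e (-(fRenorm g (x + y))) := by
      rw [← he, ← he, ← he]
      congr 1
      rw [hC]; ring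
    have k2 : e (-(fRenorm g y)) * e (-(fRenorm g (g.mulVec x)))
          * e ((omegaZ y (g.mulVec x) : ℚ)/2)
        = e C * e (-(fRenorm g (y + g.mulVec x))) := by
      rw [← he, ← he, ← he]
      congr 1
      rw [hC]; linear_combination -hkey
    rw [smul_mul_smul_comm, hmul, smul_smul, smul_mul_smul_comm, hmul, smul_smul,
      k1, k2, smul_sub, smul_smul, smul_smul]
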